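/- Let σ : ℕ → S₁ × S₂ be a path of the interleaving TS₁ ||| TS₂ of two transition systems with disjoint action sets, via a corresponding action sequence α : ℕ → Act₁ ∪ Act₂. If σ is unconditionally fair with respect to Act₁ (i.e., infinitely many indices k have α(k) ∈ Act₁), then the projection of σ onto the first component, restricted to the steps where actions from Act₁ occur, is an infinite path of TS₁. -/
import Mathlib


/-- If σ is a path of the interleaving TS₁ ||| TS₂ that is unconditionally fair
with respect to Act₁ (infinitely many steps use an Act₁ action), then the
projection of σ on the first component, restricted to the Act₁ steps, is an
infinite path of TS₁: there is a strictly monotone enumeration φ of the Act₁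
steps such that consecutive projected states are related by δ₁. -/
theorem fair_interleaving_projection_infinite_path
    {S₁ S₂ A₁ A₂ : Type}
    (δ₁ : S₁ → A₁ → S₁ → Prop) (δ₂ : S₂ → A₂ → S₂ → Prop)
    (σ : ℕ → S₁ × S₂) (α : ℕ → A₁ ⊕ A₂)
    (hstep : ∀ k,
      (∃ a, α k = Sum.inl a ∧ δ₁ (σ k).1 a (σ (k + 1)).1 ∧ (σ (k + 1)).2 = (σ k).2) ∨
      (∃ b, α k = Sum.inr b ∧ δ₂ (σ k).2 b (σ (k + 1)).2 ∧ (σ (k + 1)).1 = (σ k).1))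
    (hfair : {k : ℕ | ∃ a, α k = Sum.inl a}.Infinite) :
    ∃ φ : ℕ → ℕ, StrictMono φ ∧
      (∀ k, (∃ a, α k = Sum.inl a) ↔ ∃ n, φ n = k) ∧
      ∀ n, ∃ a, δ₁ ((σ (φ n)).1) a ((σ (φ (n + 1))).1) := by
  classical
  set p : ℕ → Prop := fun k => ∃ a, α k = Sum.inl a with hp
  have : DecidablePred p := Classical.decPred p
  have hinf : {k | p k}.Infinite := hfair
  have hmono : StrictMono (Nat.nth p) := Nat.nth_strictMono hinf
  refine ⟨Nat.nth p, hmono, ?_, ?_⟩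
  · intro k
    constructor
    · intro hk
      exact ⟨Nat.count p k, Nat.nth_count (p := p) hk⟩
    · rintro ⟨n, rfl⟩
      exact Nat.nth_mem_of_infinite hinf n
  · intro n
    -- between nth n and nth (n+1) there are no p-steps
    have hnotp : ∀ k, Nat.nth p n < k → k < Nat.nth p (n + 1) → ¬ p k := by
      intro k hk1 hk2 hpk
      have : Nat.nth p (Nat.count p k) = k := Nat.nth_count (p := p) hpk
      have hlt : n < Nat.count p k := by
        by_contra h
        push_neg at h
        have := hmono.monotone h
        omega
      have : Nat.nth p (n + 1) ≤ Nat.nth p (Nat.count p k) :=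
        hmono.monotone hlt
      omega
    -- first component constant on (nth n, nth (n+1)]
    have hconst : ∀ m, Nat.nth p n + 1 ≤ m → m ≤ Nat.nth p (n + 1) →
        (σ m).1 = (σ (Nat.nth p n + 1)).1 := by
      intro m
      induction m with
      | zero => omega
      | succ m ih =>
        intro h1 h2
        rcases Nat.lt_or_ge (Nat.nth p n + 1) (m + 1) with hlt | hge
        · have hm1 : Nat.nth p n + 1 ≤ m := by omega
          have hm2 : m ≤ Nat.nth p (n + 1) := by omega
          have hnp : ¬ p m := hnotp m (by omega) (by omega)
          rcases hstep m with ⟨a, ha, _⟩ | ⟨b, _, _, heq⟩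
          · exact absurd ⟨a, ha⟩ hnp
          · rw [heq]; exact ih hm1 hm2
        · have : m + 1 = Nat.nth p n + 1 := by omega
          rw [this]
    have hmem : p (Nat.nth p n) := Nat.nth_mem_of_infinite hinf n
    rcases hstep (Nat.nth p n) with ⟨a, _, hδ, _⟩ | ⟨b, hb, _, _⟩
    · refine ⟨a, ?_⟩
      have hle : Nat.nth p n + 1 ≤ Nat.nth p (n + 1) :=
        hmono (Nat.lt_succ_self n)
      rw [hconst (Nat.nth p (n + 1)) hle le_rfl]
      exact hδ
    · rcases hmem with ⟨a, ha⟩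
      rw [ha] at hb
      exact absurd hb (by simp)
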